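/- arXiv:2603.09441 — 2 statements merged into one kernel-verified Lean document; each statement's English description precedes it below -/
import Mathlib

section
/- Let R be an F-finite Noetherian F_p-algebra (i.e., the Frobenius endomorphism F: R → R, r ↦ r^p, is a finite ring map). Then the power series ring R[[z]] is also F-finite. -/
/-!
In characteristic `p`, the `m`-th coefficient of `f ^ p` is `(coeff (m / p) f) ^ p` if `p ∣ m`
and `0` otherwise. Hence if `y₁, …, yₙ` generate `R` over `R ^ p`, so that the coefficients of
`g` are `g_m = ∑ⱼ c_{m,j} ^ p * yⱼ`, then `g = ∑_{j, i < p} h_{j,i} ^ p * yⱼ * z ^ i` with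
`h_{j,i} = ∑_q c_{p q + i, j} z ^ q`: the `yⱼ z ^ i` generate `R⟦z⟧` over `R⟦z⟧ ^ p`.
-/

instance powerSeries_charP (R : Type*) [CommRing R] (p : ℕ) [CharP R p] :
    CharP (PowerSeries R) p :=
  charP_of_injective_ringHom (f := PowerSeries.C (R := R))
    (fun _ _ h => by
      simpa using congrArg (PowerSeries.constantCoeff (R := R)) h) p

open PowerSeries

namespace PowerSeries

variable {R : Type*} [CommSemiring R] (p : ℕ) [ExpChar R p]

theorem coeff_pow_expChar (f : R⟦X⟧) (m : ℕ) :
    coeff m (f ^ p) = if p ∣ m then coeff (m / p) f ^ p else 0 := by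
  have hp := expChar_pos R p
  calc coeff m (f ^ p)
      = coeff m ((trunc (m + 1) f : R⟦X⟧) ^ p) := by
        rw [← coeff_coe_trunc_of_lt m.lt_succ_self, ← trunc_trunc_pow,
          coeff_coe_trunc_of_lt m.lt_succ_self]
    _ = (if p ∣ m then coeff (m / p) f else 0) ^ p := by
        rw [← Polynomial.coe_pow, Polynomial.coeff_coe, ← Polynomial.map_frobenius_expand,
          Polynomial.coeff_map, Polynomial.coeff_expand hp, frobenius_def]
        split_ifs
        · rw [coeff_trunc, if_pos (Nat.lt_succ_of_le (Nat.div_le_self m p))]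
        · rfl
    _ = _ := by split_ifs <;> simp [hp.ne']

theorem coeff_pow_expChar_mul_X_pow (f : R⟦X⟧) {i : ℕ} (hi : i < p) (m : ℕ) :
    coeff m (f ^ p * X ^ i) = if m % p = i then coeff (m / p) f ^ p else 0 := by
  rw [coeff_mul_X_pow', coeff_pow_expChar]
  by_cases him : i ≤ m
  · have hdvd : p ∣ m - i ↔ m % p = i := by
      rw [← Nat.modEq_iff_dvd' him, Nat.ModEq, Nat.mod_eq_of_lt hi, eq_comm]
    by_cases hmod : m % p = i
    · rw [if_pos him, if_pos (hdvd.2 hmod), if_pos hmod]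
      have hsub : m - i = p * (m / p) := by
        rw [← hmod]; exact Nat.sub_eq_of_eq_add (Nat.div_add_mod m p).symm
      rw [hsub, Nat.mul_div_cancel_left _ (expChar_pos R p)]
    · rw [if_pos him, if_neg (mt hdvd.1 hmod), if_neg hmod]
  · rw [if_neg him, if_neg fun h : m % p = i => him (h ▸ Nat.mod_le m p)]

end PowerSeries

/-- Spelled out elementwise rather than as a `Submodule.span`: the module structure on `A` given by
`frobenius` would clash with the instance `Semiring.toModule`. -/
def FrobeniusSpans {A ι : Type*} [CommSemiring A] [Fintype ι] (p : ℕ) (y : ι → A) : Prop :=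
  ∀ a : A, ∃ c : ι → A, ∑ i, c i ^ p * y i = a

section Frobenius

variable {A : Type*} [CommRing A] {p : ℕ} [ExpChar A p]

theorem FrobeniusSpans.frobenius_finite {ι : Type*} [Fintype ι] {y : ι → A}
    (hy : FrobeniusSpans p y) : (frobenius A p).Finite := by
  let := (frobenius A p).toAlgebra
  let : Module A A := Algebra.toModule
  refine ⟨Submodule.fg_def.2 ⟨_, Set.finite_range y, Submodule.eq_top_iff'.2 fun a => ?_⟩⟩
  exact (Submodule.mem_span_range_iff_exists_fun A).2 (hy a)

theorem exists_frobeniusSpans_of_frobenius_finite (hF : (frobenius A p).Finite) :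
    ∃ (n : ℕ) (y : Fin n → A), FrobeniusSpans p y := by
  let := (frobenius A p).toAlgebra
  let : Module A A := Algebra.toModule
  obtain ⟨n, y, hy⟩ := Submodule.fg_iff_exists_fin_generating_family.1 hF.fg_top
  exact ⟨n, y, fun a => (Submodule.mem_span_range_iff_exists_fun A).1 (hy ▸ Submodule.mem_top)⟩

end Frobenius

theorem FrobeniusSpans.powerSeries {R ι : Type*} [CommSemiring R] [Fintype ι] {p : ℕ}
    [ExpChar R p] {y : ι → R} (hy : FrobeniusSpans p y) :
    FrobeniusSpans p fun ji : ι × Fin p => C (y ji.1) * (X : R⟦X⟧) ^ (ji.2 : ℕ) := by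
  intro g
  choose c hc using fun m => hy (coeff m g)
  refine ⟨fun ji => mk fun q => c (p * q + ji.2) ji.1, ?_⟩
  ext m
  have hterm : ∀ (j : ι) (i : ℕ), i < p →
      coeff m ((mk fun q => c (p * q + i) j) ^ p * (C (y j) * X ^ i)) =
        if m % p = i then c m j ^ p * y j else 0 := by
    intro j i hi
    rw [mul_left_comm, coeff_C_mul, coeff_pow_expChar_mul_X_pow p _ hi, coeff_mk]
    split_ifs with hmod
    · rw [← hmod, Nat.div_add_mod, mul_comm]
    · rw [mul_zero]
  rw [map_sum, Fintype.sum_prod_type, ← hc m]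
  refine Finset.sum_congr rfl fun j _ => ?_
  rw [Finset.sum_congr rfl fun (i : Fin p) _ => hterm j i i.2,
    Fin.sum_univ_eq_sum_range (fun i => if m % p = i then c m j ^ p * y j else 0),
    Finset.sum_ite_eq, if_pos (Finset.mem_range.2 (Nat.mod_lt m (expChar_pos R p)))]

theorem powerSeries_F_finite_general
    (p : ℕ) [Fact p.Prime] (R : Type*) [CommRing R] [CharP R p]
    (hF : (frobenius R p).Finite) :
    (frobenius (PowerSeries R) p).Finite := by
  obtain ⟨n, y, hy⟩ := exists_frobeniusSpans_of_frobenius_finite hF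
  exact hy.powerSeries.frobenius_finite

/-- Let `R` be an `F`-finite Noetherian `𝔽_p`-algebra (the Frobenius
`r ↦ r^p` is a finite ring map).  Then the power series ring `R[[z]]` is also `F`-finite. -/
theorem powerSeries_F_finite
    (p : ℕ) [Fact p.Prime] (R : Type*) [CommRing R] [IsNoetherianRing R] [CharP R p]
    (hF : (frobenius R p).Finite) :
    (frobenius (PowerSeries R) p).Finite :=
  powerSeries_F_finite_general p R hF
end

section
/- Let R be a Noetherian F_p-algebra which is F-finite. Then the module of Kähler differentials Ω¹_{R[[z]]/R[z]} of the power series ring over the polynomial ring vanishes; equivalently, the natural map R[z] → R[[z]] is formally unramified. -/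
open scoped KaehlerDifferential

noncomputable instance polyToPowerSeriesAlgebra (R : Type*) [CommRing R] :
    Algebra (Polynomial R) (PowerSeries R) :=
  (Polynomial.coeToPowerSeries.ringHom : Polynomial R →+* PowerSeries R).toAlgebra

/-! `R⟦X⟧` is again F-finite: splitting exponents modulo `p` writes `f = ∑_{r<p} X^r f_r(X^p)`,
and expanding every coefficient of `f_r` as `∑ c_e^p e` over finitely many generators `e` of
`R` over `R^p` puts `f` in the span of the `C e * X^r` over `p`-th powers. The universal
derivation kills `p`-th powers, so `Ω[R⟦X⟧⁄R[X]]` is a finite `R⟦X⟧`-module. Since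
`f = f(0) + X g` with `f(0)` and `X` coming from `R[X]`, we get `d f = X • d g`, so `Ω = X • Ω`,
and Nakayama's lemma (`X` lies in the Jacobson radical) forces `Ω = 0`. -/

open PowerSeries Polynomial Finset
open scoped Pointwise

section FrobeniusFinite

variable {R : Type*} [CommRing R] (p : ℕ) [ExpChar R p]

theorem exists_finset_forall_eq_sum_pow_mul_of_frobenius_finite (hF : (frobenius R p).Finite) :
    ∃ s : Finset R, ∀ a : R, ∃ c : R → R, a = ∑ e ∈ s, c e ^ p * e := by
  let := (frobenius R p).toAlgebra
  let : Module R R := Algebra.toModule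
  obtain ⟨s, hs⟩ := (hF : Module.Finite R R).fg_top
  refine ⟨s, fun a => ?_⟩
  have ha : a ∈ Submodule.span R (s : Set R) := hs ▸ Submodule.mem_top
  obtain ⟨c, -, hc⟩ := Submodule.mem_span_finset.mp ha
  -- for this module structure `c • x` unfolds to `c ^ p * x`
  exact ⟨c, hc.symm⟩

theorem frobenius_finite_of_forall_eq_sum_pow_mul {ι : Type*} (s : Finset ι) (g : ι → R)
    (h : ∀ a : R, ∃ c : ι → R, a = ∑ i ∈ s, c i ^ p * g i) : (frobenius R p).Finite := by
  let := (frobenius R p).toAlgebra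
  let : Module R R := Algebra.toModule
  refine ⟨Submodule.fg_def.2 ⟨g '' s, s.finite_toSet.image g, eq_top_iff.2 fun a _ => ?_⟩⟩
  obtain ⟨c, rfl⟩ := h a
  exact Submodule.sum_mem _ fun i hi =>
    Submodule.smul_mem _ (c i) (Submodule.subset_span ⟨i, hi, rfl⟩)

end FrobeniusFinite

theorem Derivation.map_pow_char {R A M : Type*} [CommSemiring R] [CommSemiring A] [Algebra R A]
    [AddCommMonoid M] [Module A M] [Module R M] [IsScalarTower R A M] (D : Derivation R A M)
    (p : ℕ) [CharP A p] (a : A) : D (a ^ p) = 0 := by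
  rw [D.leibniz_pow, ← Nat.cast_smul_eq_nsmul A, CharP.cast_eq_zero, zero_smul]

open KaehlerDifferential (D span_range_derivation)

theorem KaehlerDifferential.finite_of_frobenius_finite {A S : Type*} [CommRing A] [CommRing S]
    [Algebra A S] (p : ℕ) [Fact p.Prime] [CharP S p] (hF : (frobenius S p).Finite) :
    Module.Finite S Ω[S⁄A] := by
  obtain ⟨s, hs⟩ := exists_finset_forall_eq_sum_pow_mul_of_frobenius_finite p hF
  suffices Submodule.span S (D A S '' s) = ⊤ from
    ⟨this ▸ Submodule.fg_span (s.finite_toSet.image _)⟩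
  rw [eq_top_iff, ← span_range_derivation, Submodule.span_le]
  rintro _ ⟨a, rfl⟩
  obtain ⟨c, rfl⟩ := hs a
  rw [map_sum]
  refine Submodule.sum_mem _ fun e he => ?_
  rw [Derivation.leibniz, Derivation.map_pow_char _ p, smul_zero, add_zero]
  exact Submodule.smul_mem _ _ (Submodule.subset_span ⟨e, he, rfl⟩)

namespace PowerSeries

variable {R : Type*} [CommRing R]

instance charP (p : ℕ) [CharP R p] : CharP R⟦X⟧ p :=
  charP_of_injective_algebraMap C_injective p

theorem eq_sum_X_pow_mul_expand (p : ℕ) (hp : p ≠ 0) (f : R⟦X⟧) :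
    f = ∑ r ∈ range p, X ^ r * expand p hp (mk fun q => coeff (p * q + r) f) := by
  ext n
  rw [map_sum, Finset.sum_eq_single (n % p)]
  · rw [coeff_X_pow_mul', if_pos (Nat.mod_le n p), coeff_expand, if_pos (Nat.dvd_sub_mod n),
      coeff_mk, Nat.mul_div_cancel' (Nat.dvd_sub_mod n), Nat.sub_add_cancel (Nat.mod_le n p)]
  · intro r hr hne
    rw [coeff_X_pow_mul']
    split_ifs with hle
    · rw [coeff_expand, if_neg]
      rintro ⟨k, hk⟩
      apply hne
      rw [show n = p * k + r by omega, Nat.mul_add_mod, Nat.mod_eq_of_lt (mem_range.1 hr)]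
    · rfl
  · exact fun h => absurd (mem_range.2 (Nat.mod_lt n (Nat.pos_of_ne_zero hp))) h

theorem map_frobenius_expand (p : ℕ) [ExpChar R p] (f : R⟦X⟧) :
    map (frobenius R p) (expand p (expChar_ne_zero R p) f) = f ^ p :=
  MvPowerSeries.map_frobenius_expand p _

theorem expand_eq_sum_pow_mul_C (p : ℕ) [ExpChar R p] (s : Finset R) (c : R → R → R)
    (hc : ∀ a, a = ∑ e ∈ s, c a e ^ p * e) (g : R⟦X⟧) :
    expand p (expChar_ne_zero R p) g = ∑ e ∈ s, (mk fun q => c (coeff q g) e) ^ p * C e := by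
  have hg : g = ∑ e ∈ s, map (frobenius R p) (mk fun q => c (coeff q g) e) * C e := by
    ext q
    simp only [map_sum, coeff_mul_C, coeff_map, coeff_mk, frobenius_def]
    exact hc _
  conv_lhs => rw [hg]
  simp only [map_sum, map_mul, expand_C, ← map_expand, map_frobenius_expand]

theorem frobenius_finite (p : ℕ) [Fact p.Prime] [CharP R p] (hF : (frobenius R p).Finite) :
    (frobenius R⟦X⟧ p).Finite := by
  obtain ⟨s, hs⟩ := exists_finset_forall_eq_sum_pow_mul_of_frobenius_finite p hF
  choose c hc using hs
  refine frobenius_finite_of_forall_eq_sum_pow_mul p (s ×ˢ range p) (fun er => C er.1 * X ^ er.2)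
    fun f => ⟨fun er => mk fun q => c (coeff (p * q + er.2) f) er.1, ?_⟩
  conv_lhs => rw [eq_sum_X_pow_mul_expand p (expChar_ne_zero R p) f]
  simp_rw [expand_eq_sum_pow_mul_C p s c hc, coeff_mk, Finset.mul_sum, Finset.sum_product_right]
  exact sum_congr rfl fun r _ => sum_congr rfl fun e _ => by ring

theorem X_mem_jacobson_bot : (X : R⟦X⟧) ∈ (⊥ : Ideal R⟦X⟧).jacobson :=
  Ideal.mem_jacobson_bot.2 fun y => isUnit_iff_constantCoeff.2 (by simp)

theorem kaehlerDifferential_D_coe (φ : R[X]) : D R[X] R⟦X⟧ (φ : R⟦X⟧) = 0 :=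
  (D R[X] R⟦X⟧).map_algebraMap φ

theorem kaehlerDifferential_top_eq_X_smul_top :
    (⊤ : Submodule R⟦X⟧ Ω[R⟦X⟧⁄R[X]]) = (X : R⟦X⟧) • ⊤ := by
  refine le_antisymm ?_ le_top
  rw [← span_range_derivation, Submodule.span_le]
  rintro _ ⟨f, rfl⟩
  have hX : D R[X] R⟦X⟧ X = 0 := by
    rw [← Polynomial.coe_X, kaehlerDifferential_D_coe]
  rw [eq_X_mul_shift_add_const f, map_add, Derivation.leibniz, hX, ← Polynomial.coe_C,
    kaehlerDifferential_D_coe, smul_zero, add_zero, add_zero]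
  exact Submodule.smul_mem_pointwise_smul _ _ _ (Submodule.subset_span ⟨_, rfl⟩)

end PowerSeries

theorem powerSeries_formally_unramified_over_polynomials_general
    (p : ℕ) [Fact p.Prime] (R : Type*) [CommRing R] [CharP R p]
    (hF : (frobenius R p).Finite) :
    Subsingleton (Ω[PowerSeries R⁄Polynomial R]) ∧
      Algebra.FormallyUnramified (Polynomial R) (PowerSeries R) := by
  have hfin : Module.Finite R⟦X⟧ Ω[R⟦X⟧⁄R[X]] :=
    KaehlerDifferential.finite_of_frobenius_finite p (PowerSeries.frobenius_finite p hF)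
  have hbot : (⊤ : Submodule R⟦X⟧ Ω[R⟦X⟧⁄R[X]]) = ⊥ :=
    Submodule.eq_bot_of_eq_pointwise_smul_of_mem_jacobson_annihilator hfin.fg_top
      kaehlerDifferential_top_eq_X_smul_top (Ideal.jacobson_mono bot_le X_mem_jacobson_bot)
  have hΩ : Subsingleton Ω[R⟦X⟧⁄R[X]] :=
    (Submodule.subsingleton_iff _).1 (subsingleton_of_bot_eq_top hbot.symm)
  exact ⟨hΩ, ⟨hΩ⟩⟩

/-- Let `R` be a Noetherian `𝔽_p`-algebra which is `F`-finite.  Then the module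
of Kähler differentials `Ω¹_{R[[z]]/R[z]}` vanishes; equivalently, the natural map
`R[z] → R[[z]]` is formally unramified. -/
theorem powerSeries_formally_unramified_over_polynomials
    (p : ℕ) [Fact p.Prime] (R : Type*) [CommRing R] [IsNoetherianRing R] [CharP R p]
    (hF : (frobenius R p).Finite) :
    Subsingleton (Ω[PowerSeries R⁄Polynomial R]) ∧
      Algebra.FormallyUnramified (Polynomial R) (PowerSeries R) :=
  powerSeries_formally_unramified_over_polynomials_general p R hF
end
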